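/- For n ≥ 2, there exists a real time t such that (4/n²) sin²(tn/(2(n-1))) = 1/n if and only if n ≤ 4. Consequently, the continuous-time quantum walk on K_n is instantaneously uniform mixing if and only if n ∈ {2,3,4}. -/

import Mathlib

set_option maxHeartbeats 1000000

open Matrix Complex

theorem qw_exp_smul_idem {𝔸 : Type*} [NormedRing 𝔸] [NormedAlgebra ℂ 𝔸] [CompleteSpace 𝔸]
    (x : ℂ) (p : 𝔸) (hp : p * p = p) :
    NormedSpace.exp (x • p) = 1 + (NormedSpace.exp x - 1) • p := by
  have hpow : ∀ k : ℕ, p ^ (k + 1) = p := by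
    intro k; induction k with
    | zero => simp
    | succ k ih => rw [pow_succ, ih, hp]
  have hsum : Summable fun k : ℕ => ((k.factorial)⁻¹ : ℂ) • (x • p) ^ k :=
    NormedSpace.expSeries_summable' (𝕂 := ℂ) (x • p)
  have hsum2 : Summable fun k : ℕ => (((k + 1).factorial)⁻¹ : ℂ) * x ^ (k + 1) := by
    have := (NormedSpace.expSeries_summable' (𝕂 := ℂ) x).comp_injective Nat.succ_injective
    simpa [Function.comp_def, smul_eq_mul] using this
  rw [NormedSpace.exp_eq_tsum ℂ]
  beta_reduce
  rw [hsum.tsum_eq_zero_add]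
  have hterm : ∀ k : ℕ, (((k + 1).factorial)⁻¹ : ℂ) • (x • p) ^ (k + 1)
      = ((((k + 1).factorial)⁻¹ : ℂ) * x ^ (k + 1)) • p := by
    intro k
    rw [smul_pow, hpow, smul_smul]
  simp only [hterm]
  rw [hsum2.tsum_smul_const]
  have : (∑' k : ℕ, (((k + 1).factorial)⁻¹ : ℂ) * x ^ (k + 1)) = NormedSpace.exp x - 1 := by
    have hx : NormedSpace.exp x = ∑' k : ℕ, ((k.factorial)⁻¹ : ℂ) • x ^ k := by
      rw [NormedSpace.exp_eq_tsum ℂ]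
    rw [hx, (NormedSpace.expSeries_summable' (𝕂 := ℂ) x).tsum_eq_zero_add]
    simp [smul_eq_mul]
  rw [this]
  simp

theorem qw_matrix_exp_smul_idem {m : Type*} [Fintype m] [DecidableEq m]
    (x : ℂ) (p : Matrix m m ℂ) (hp : p * p = p) :
    NormedSpace.exp (x • p) = 1 + (NormedSpace.exp x - 1) • p := by
  letI : SeminormedRing (Matrix m m ℂ) := Matrix.linftyOpSemiNormedRing
  letI : NormedRing (Matrix m m ℂ) := Matrix.linftyOpNormedRing
  letI : NormedAlgebra ℂ (Matrix m m ℂ) := Matrix.linftyOpNormedAlgebra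
  exact qw_exp_smul_idem x p hp

theorem qw_amp_formula (n : ℕ) (hn : 2 ≤ n) (t : ℝ) (j : Fin n) :
    (NormedSpace.exp ((-(t : ℂ) * Complex.I) •
        (((n : ℂ) - 1)⁻¹ • ((Matrix.of fun _ _ => (1 : ℂ)) - 1)))).mulVec
      (fun k : Fin n => if k = (⟨0, (by omega : 1 ≤ n)⟩ : Fin n) then 1 else 0) j
    = Complex.exp ((t : ℂ) * Complex.I * ((n : ℂ) - 1)⁻¹) *
        ((if j = (⟨0, (by omega : 1 ≤ n)⟩ : Fin n) then 1 else 0) +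
          (Complex.exp (-(t : ℂ) * Complex.I * (n : ℂ) * ((n : ℂ) - 1)⁻¹) - 1) * (n : ℂ)⁻¹) := by
  have hn0 : (n : ℂ) ≠ 0 := Nat.cast_ne_zero.2 (by omega)
  have hn1 : ((n : ℂ) - 1) ≠ 0 := by
    intro h
    have : (n : ℂ) = ((1 : ℕ) : ℂ) := by push_cast; linear_combination h
    have := Nat.cast_injective (R := ℂ) this
    omega
  set J : Matrix (Fin n) (Fin n) ℂ := Matrix.of fun _ _ => (1 : ℂ) with hJ
  set c : ℂ := -(t : ℂ) * Complex.I * ((n : ℂ) - 1)⁻¹ with hc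
  have hA : (-(t : ℂ) * Complex.I) • (((n : ℂ) - 1)⁻¹ • (J - 1)) =
      c • J + (-c) • (1 : Matrix (Fin n) (Fin n) ℂ) := by
    rw [smul_smul, smul_sub, ← hc, neg_smul, sub_eq_add_neg]
  have hJJ : J * J = (n : ℂ) • J := by
    ext i k
    simp [hJ, Matrix.mul_apply, Finset.card_univ]
  set P : Matrix (Fin n) (Fin n) ℂ := (n : ℂ)⁻¹ • J with hP
  have hPP : P * P = P := by
    rw [hP, Matrix.smul_mul, Matrix.mul_smul, hJJ, smul_smul, smul_smul]
    congr 1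
    field_simp
  have hcJ : c • J = (c * n) • P := by
    rw [hP, smul_smul]
    congr 1
    field_simp
  have hcomm : Commute (c • J) ((-c) • (1 : Matrix (Fin n) (Fin n) ℂ)) :=
    ((Commute.one_right J).smul_left c).smul_right (-c)
  have hexp : NormedSpace.exp ((-(t : ℂ) * Complex.I) • (((n : ℂ) - 1)⁻¹ • (J - 1))) =
      Complex.exp (-c) • ((1 : Matrix (Fin n) (Fin n) ℂ) + (Complex.exp (c * n) - 1) • P) := by
    rw [hA, Matrix.exp_add_of_commute _ _ hcomm, hcJ, qw_matrix_exp_smul_idem _ P hPP,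
      qw_matrix_exp_smul_idem _ 1 (one_mul 1), Complex.exp_eq_exp_ℂ]
    have key : ∀ (X : Matrix (Fin n) (Fin n) ℂ) (f : ℂ), X + (f - 1) • X = f • X := by
      intro X f
      rw [sub_smul, one_smul]
      abel
    rw [mul_add, mul_one, Matrix.mul_smul, mul_one]
    exact key _ _
  rw [hexp]
  rw [Matrix.smul_mulVec]
  have hmv : ((1 : Matrix (Fin n) (Fin n) ℂ) + (Complex.exp (c * n) - 1) • P).mulVec
      (fun k : Fin n => if k = (⟨0, (by omega : 1 ≤ n)⟩ : Fin n) then 1 else 0) j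
      = (if j = (⟨0, (by omega : 1 ≤ n)⟩ : Fin n) then 1 else 0) +
        (Complex.exp (-(t : ℂ) * Complex.I * (n : ℂ) * ((n : ℂ) - 1)⁻¹) - 1) * (n : ℂ)⁻¹ := by
    rw [Matrix.add_mulVec, Matrix.one_mulVec, Matrix.smul_mulVec, hP,
      Matrix.smul_mulVec]
    have hJv : J.mulVec (fun k : Fin n => if k = (⟨0, (by omega : 1 ≤ n)⟩ : Fin n) then 1 else 0) j = 1 := by
      simp [hJ, Matrix.mulVec, dotProduct]
    simp only [Pi.add_apply, Pi.smul_apply, hJv, smul_eq_mul]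
    congr 1
    · rw [show c * (n : ℂ) = -(t : ℂ) * Complex.I * (n : ℂ) * ((n : ℂ) - 1)⁻¹ by rw [hc]; ring]
      ring
  rw [Pi.smul_apply, hmv, smul_eq_mul]
  congr 2
  rw [hc]
  ring

theorem qw_key_iff (n : ℕ) (hn : 2 ≤ n) (t : ℝ) :
    (∀ j : Fin n,
        ‖(NormedSpace.exp ((-(t : ℂ) * Complex.I) •
            (((n : ℂ) - 1)⁻¹ • ((Matrix.of fun _ _ => (1 : ℂ)) - 1)))).mulVec
          (fun k : Fin n => if k = (⟨0, (by omega : 1 ≤ n)⟩ : Fin n) then 1 else 0) j‖ ^ 2 = 1 / n) ↔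
      4 / (n : ℝ) ^ 2 * Real.sin (t * n / (2 * ((n : ℝ) - 1))) ^ 2 = 1 / n := by
  have hN : (2 : ℝ) ≤ (n : ℝ) := by exact_mod_cast hn
  have hn0 : (n : ℝ) ≠ 0 := by positivity
  have hn1 : ((n : ℝ) - 1) ≠ 0 := by nlinarith
  set θ : ℝ := -(t * n / ((n : ℝ) - 1)) with hθ
  have habs : ∀ j : Fin n,
      ‖(NormedSpace.exp ((-(t : ℂ) * Complex.I) •
          (((n : ℂ) - 1)⁻¹ • ((Matrix.of fun _ _ => (1 : ℂ)) - 1)))).mulVec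
        (fun k : Fin n => if k = (⟨0, (by omega : 1 ≤ n)⟩ : Fin n) then 1 else 0) j‖ ^ 2
      = ((if j = (⟨0, (by omega : 1 ≤ n)⟩ : Fin n) then (1 : ℝ) else 0) + (Real.cos θ - 1) / n) ^ 2
          + (Real.sin θ / n) ^ 2 := by
    intro j
    rw [qw_amp_formula n hn t j, norm_mul, mul_pow]
    have h1 : (t : ℂ) * Complex.I * ((n : ℂ) - 1)⁻¹ = ((t / ((n : ℝ) - 1) : ℝ) : ℂ) * Complex.I := by
      push_cast
      ring
    rw [h1, Complex.norm_exp_ofReal_mul_I, one_pow, one_mul, Complex.sq_norm]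
    have h2 : -(t : ℂ) * Complex.I * (n : ℂ) * ((n : ℂ) - 1)⁻¹ = ((θ : ℝ) : ℂ) * Complex.I := by
      rw [hθ]
      push_cast
      ring
    rw [h2, Complex.exp_mul_I]
    by_cases hj : j = (⟨0, (by omega : 1 ≤ n)⟩ : Fin n)
    · rw [if_pos hj, if_pos hj]
      have h3 : (1 : ℂ) + (Complex.cos θ + Complex.sin θ * Complex.I - 1) * (n : ℂ)⁻¹
          = (((1 + (Real.cos θ - 1) / n : ℝ)) : ℂ) + (((Real.sin θ / n : ℝ)) : ℂ) * Complex.I := by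
        rw [← Complex.ofReal_cos, ← Complex.ofReal_sin]
        push_cast
        ring
      rw [h3, Complex.normSq_add_mul_I]
    · rw [if_neg hj, if_neg hj]
      have h3 : (0 : ℂ) + (Complex.cos θ + Complex.sin θ * Complex.I - 1) * (n : ℂ)⁻¹
          = (((0 + (Real.cos θ - 1) / n : ℝ)) : ℂ) + (((Real.sin θ / n : ℝ)) : ℂ) * Complex.I := by
        rw [← Complex.ofReal_cos, ← Complex.ofReal_sin]
        push_cast
        ring
      rw [h3, Complex.normSq_add_mul_I]
  have hs : Real.sin (t * n / (2 * ((n : ℝ) - 1))) ^ 2 = 1 / 2 - Real.cos θ / 2 := by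
    rw [Real.sin_sq_eq_half_sub]
    have h4 : 2 * (t * n / (2 * ((n : ℝ) - 1))) = -θ := by
      rw [hθ]
      field_simp
    rw [h4, Real.cos_neg]
  have hpy := Real.sin_sq_add_cos_sq θ
  constructor
  · intro h
    have hne : (⟨1, by omega⟩ : Fin n) ≠ (⟨0, (by omega : 1 ≤ n)⟩ : Fin n) := by
      simp [Fin.ext_iff]
    have h1 := h ⟨1, by omega⟩
    rw [habs, if_neg hne] at h1
    rw [hs]
    field_simp at h1 ⊢
    nlinarith [h1, hpy]
  · intro h j
    rw [hs] at h
    have hcos : Real.cos θ = 1 - n / 2 := by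
      field_simp at h
      have h5 : ((2 : ℝ) - 2 * Real.cos θ) * (n : ℝ) = (n : ℝ) * (n : ℝ) := by nlinarith [h]
      have := mul_right_cancel₀ hn0 h5
      linarith [mul_right_cancel₀ hn0 (show ((2 : ℝ) - 2 * Real.cos θ) * (n : ℝ) = ((n : ℝ)) * (n : ℝ) from h5)]
    rw [habs]
    by_cases hj : j = (⟨0, (by omega : 1 ≤ n)⟩ : Fin n)
    · rw [if_pos hj]
      field_simp
      nlinarith [hpy, hcos]
    · rw [if_neg hj]
      field_simp
      nlinarith [hpy, hcos]

/-- For `n ≥ 2`, there exists a real time `t` with `(4/n²) sin²(tn/(2(n-1))) = 1/n`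
if and only if `n ≤ 4`. Consequently, the continuous-time quantum walk on `K_n` is
instantaneously uniform mixing if and only if `n ∈ {2, 3, 4}`. -/
theorem completeGraph_uniform_mixing_iff (n : ℕ) (hn : 2 ≤ n) :
    ((∃ t : ℝ, 4 / (n : ℝ) ^ 2 * Real.sin (t * n / (2 * ((n : ℝ) - 1))) ^ 2 = 1 / n) ↔
      n ≤ 4) ∧
    ((∃ t : ℝ, ∀ j : Fin n,
        ‖(NormedSpace.exp ((-(t : ℂ) * Complex.I) •
            (((n : ℂ) - 1)⁻¹ • ((Matrix.of fun _ _ => (1 : ℂ)) - 1)))).mulVec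
          (fun k : Fin n => if k = (⟨0, by omega⟩ : Fin n) then 1 else 0) j‖ ^ 2 = 1 / n) ↔
      (n = 2 ∨ n = 3 ∨ n = 4)) := by
  have hN : (2 : ℝ) ≤ (n : ℝ) := by exact_mod_cast hn
  have hn0 : (n : ℝ) ≠ 0 := by positivity
  have hn1 : ((n : ℝ) - 1) ≠ 0 := by nlinarith
  have part1 : (∃ t : ℝ, 4 / (n : ℝ) ^ 2 * Real.sin (t * n / (2 * ((n : ℝ) - 1))) ^ 2 = 1 / n) ↔
      n ≤ 4 := by
    constructor
    · rintro ⟨t, ht⟩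
      by_contra hgt
      push_neg at hgt
      have h5 : (5 : ℝ) ≤ (n : ℝ) := by exact_mod_cast hgt
      have hsin : Real.sin (t * n / (2 * ((n : ℝ) - 1))) ^ 2 ≤ 1 := by
        have := Real.neg_one_le_sin (t * n / (2 * ((n : ℝ) - 1)))
        have := Real.sin_le_one (t * n / (2 * ((n : ℝ) - 1)))
        nlinarith
      have : 4 / (n : ℝ) ^ 2 * Real.sin (t * n / (2 * ((n : ℝ) - 1))) ^ 2 ≤ 4 / (n : ℝ) ^ 2 := by
        have h4 : (0 : ℝ) < 4 / (n : ℝ) ^ 2 := by positivity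
        nlinarith
      rw [ht] at this
      have : (n : ℝ) ≤ 4 := by
        rw [div_le_div_iff₀ (by positivity) (by positivity)] at this
        nlinarith
      linarith
    · intro hle
      have h4 : (n : ℝ) ≤ 4 := by exact_mod_cast hle
      set s : ℝ := Real.arcsin (Real.sqrt n / 2) with hsdef
      refine ⟨2 * ((n : ℝ) - 1) * s / n, ?_⟩
      have harg : 2 * ((n : ℝ) - 1) * s / n * n / (2 * ((n : ℝ) - 1)) = s := by
        field_simp
      rw [harg]
      have hb1 : Real.sqrt n / 2 ≤ 1 := by
        have : Real.sqrt n ≤ 2 := by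
          rw [show (2 : ℝ) = Real.sqrt 4 by
            rw [show (4 : ℝ) = 2 ^ 2 by norm_num, Real.sqrt_sq (by norm_num)]]
          exact Real.sqrt_le_sqrt h4
        linarith
      have hb0 : (-1 : ℝ) ≤ Real.sqrt n / 2 := by
        have := Real.sqrt_nonneg (n : ℝ)
        linarith
      have hsin : Real.sin s = Real.sqrt n / 2 := Real.sin_arcsin hb0 hb1
      rw [hsin]
      rw [div_pow, Real.sq_sqrt (by positivity)]
      field_simp
      ring
  refine ⟨part1, ?_⟩
  constructor
  · rintro ⟨t, ht⟩
    have := part1.1 ⟨t, (qw_key_iff n hn t).1 ht⟩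
    omega
  · intro hcase
    have hle : n ≤ 4 := by omega
    obtain ⟨t, ht⟩ := part1.2 hle
    exact ⟨t, (qw_key_iff n hn t).2 ht⟩
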